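/- arXiv:1207.1589 — 6 statements merged into one kernel-verified Lean document; each statement's English description precedes it below -/
import Mathlib

section
/- Let X be a T1 topological space and Y a topological space. Then the graph topology τ_Γ on C(X,Y) coincides with the topology that C(X,Y) inherits from the Vietoris topology on the hyperspace of nonempty closed subsets of X × Y, under the embedding sending each continuous function f to its graph {(x, f(x)) : x ∈ X}. -/
open TopologicalSpace Set

/-- The graph of a continuous map, as a subset of `X × Y`. -/
def graphSet {X Y : Type*} [TopologicalSpace X] [TopologicalSpace Y] (f : C(X, Y)) :
    Set (X × Y) := {p | p.2 = f p.1}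

/-- The graph topology `τ_Γ` on `C(X, Y)`, generated by the sets
`F_G = {f | graph f ⊆ G}` for `G` open in `X × Y`. -/
def graphTopology (X Y : Type*) [TopologicalSpace X] [TopologicalSpace Y] :
    TopologicalSpace C(X, Y) :=
  generateFrom {S | ∃ G : Set (X × Y), IsOpen G ∧ S = {f : C(X, Y) | graphSet f ⊆ G}}

/-- The hyperspace of nonempty closed subsets of a topological space `Z`. -/
def NonemptyCloseds (Z : Type*) [TopologicalSpace Z] : Type _ :=
  {C : Set Z // IsClosed C ∧ C.Nonempty}

/-- The Vietoris topology on the hyperspace of nonempty closed subsets of `Z`,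
generated by the sets `{A | A ⊆ G}` and `{A | A ∩ G ≠ ∅}` for `G` open in `Z`. -/
def vietorisTopology (Z : Type*) [TopologicalSpace Z] :
    TopologicalSpace (NonemptyCloseds Z) :=
  generateFrom {S | ∃ G : Set Z, IsOpen G ∧
    (S = {A : NonemptyCloseds Z | A.1 ⊆ G} ∨
     S = {A : NonemptyCloseds Z | (A.1 ∩ G).Nonempty})}

/-- For `Y` Hausdorff, the graph of a continuous map is closed in `X × Y`. -/
lemma isClosed_graphSet {X Y : Type*} [TopologicalSpace X] [TopologicalSpace Y]
    [T2Space Y] (f : C(X, Y)) : IsClosed (graphSet f) :=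
  isClosed_eq continuous_snd (f.continuous.comp continuous_fst)

lemma graphSet_nonempty {X Y : Type*} [TopologicalSpace X] [TopologicalSpace Y]
    [Nonempty X] (f : C(X, Y)) : (graphSet f).Nonempty :=
  ⟨(Classical.arbitrary X, f (Classical.arbitrary X)), rfl⟩

/-!
A hit set `{f | graph f ∩ G ≠ ∅}` is the union over `x ∈ X` of the miss-type sets
`{f | graph f ⊆ G ∪ ({x}ᶜ × Y)}`: the graph meets `G` exactly when, for some `x`, its only
point over `x` lies in `G`. Since `X` is T₁, `{x}ᶜ × Y` is open, so every Vietoris subbasic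
set pulls back to a `τ_Γ`-open set; conversely `F_G` is the pullback of `{A | A ⊆ G}`.
-/

open scoped Topology

section

variable {X Y : Type*} [TopologicalSpace X] [TopologicalSpace Y]

lemma mk_mem_graphSet (f : C(X, Y)) (x : X) : (x, f x) ∈ graphSet f := rfl

lemma graphSet_inter_nonempty_iff (f : C(X, Y)) (G : Set (X × Y)) :
    (graphSet f ∩ G).Nonempty ↔ ∃ x, (x, f x) ∈ G := by
  constructor
  · rintro ⟨⟨x, y⟩, rfl : y = f x, hG⟩
    exact ⟨x, hG⟩
  · rintro ⟨x, hG⟩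
    exact ⟨(x, f x), mk_mem_graphSet f x, hG⟩

lemma graphSet_subset_union_compl_singleton_prod_iff (f : C(X, Y)) (G : Set (X × Y)) (x : X) :
    graphSet f ⊆ G ∪ ({x}ᶜ ×ˢ univ) ↔ (x, f x) ∈ G := by
  constructor
  · intro h
    simpa using h (mk_mem_graphSet f x)
  · rintro hx ⟨x', _⟩ (rfl : _ = f x')
    by_cases hx' : x' = x
    · subst hx'
      exact Or.inl hx
    · exact Or.inr ⟨hx', mem_univ _⟩

lemma isOpen_graphTopology_setOf_graphSet_subset {G : Set (X × Y)} (hG : IsOpen G) :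
    IsOpen[graphTopology X Y] {f | graphSet f ⊆ G} :=
  isOpen_generateFrom_of_mem ⟨G, hG, rfl⟩

lemma isOpen_graphTopology_setOf_graphSet_inter_nonempty [T1Space X] {G : Set (X × Y)}
    (hG : IsOpen G) : IsOpen[graphTopology X Y] {f | (graphSet f ∩ G).Nonempty} := by
  have hunion : {f : C(X, Y) | (graphSet f ∩ G).Nonempty} =
      ⋃ x : X, {f | graphSet f ⊆ G ∪ ({x}ᶜ ×ˢ univ)} := by
    ext f
    simp only [mem_ofPred_eq, mem_iUnion, graphSet_inter_nonempty_iff,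
      graphSet_subset_union_compl_singleton_prod_iff]
  rw [hunion]
  exact @isOpen_iUnion _ _ (graphTopology X Y) _ fun x =>
    isOpen_graphTopology_setOf_graphSet_subset (hG.union (isOpen_compl_singleton.prod isOpen_univ))

end

/-- For `X` a T₁ space (and `Y` Hausdorff, `X` nonempty, so that the
graph embedding into the hyperspace of nonempty closed subsets of `X × Y` is well
defined), the graph topology on `C(X, Y)` coincides with the topology induced from
the Vietoris topology under the embedding `f ↦ graph f`. -/
theorem graphTopology_eq_induced_vietoris (X Y : Type*) [TopologicalSpace X]
    [TopologicalSpace Y] [T1Space X] [T2Space Y] [Nonempty X] :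
    graphTopology X Y =
      TopologicalSpace.induced
        (fun f : C(X, Y) =>
          (⟨graphSet f, isClosed_graphSet f, graphSet_nonempty f⟩ : NonemptyCloseds (X × Y)))
        (vietorisTopology (X × Y)) := by
  refine le_antisymm (le_induced_generateFrom (t := graphTopology X Y) ?_) (le_generateFrom ?_)
  · rintro _ ⟨G, hG, rfl | rfl⟩
    · exact isOpen_graphTopology_setOf_graphSet_subset hG
    · exact isOpen_graphTopology_setOf_graphSet_inter_nonempty hG
  · rintro _ ⟨G, hG, rfl⟩
    exact isOpen_induced (t := vietorisTopology _)
      (isOpen_generateFrom_of_mem ⟨G, hG, Or.inl rfl⟩)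
end

section
/- Let X and Y be Hausdorff topological spaces. If the product space X × Y is normal, then the space C(X,Y) equipped with the graph topology τ_Γ is a regular topological space. -/
open TopologicalSpace Set

lemma graphSet_subset_iff {X Y : Type*} [TopologicalSpace X] [TopologicalSpace Y]
    (f : C(X, Y)) (G : Set (X × Y)) : graphSet f ⊆ G ↔ ∀ x, (x, f x) ∈ G := by
  constructor
  · intro h x; exact h rfl
  · rintro h ⟨a, b⟩ (hb : b = f a); subst hb; exact h a

/-- If `X`, `Y` are Hausdorff and `X × Y` is normal, then
`(C(X, Y), τ_Γ)` is regular. -/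
theorem regularSpace_graphTopology_of_normal (X Y : Type*) [TopologicalSpace X]
    [TopologicalSpace Y] [T2Space X] [T2Space Y] [NormalSpace (X × Y)] :
    @RegularSpace C(X, Y) (graphTopology X Y) := by
  letI := graphTopology X Y
  set B : Set (Set C(X, Y)) :=
    {S | ∃ G : Set (X × Y), IsOpen G ∧ S = {f : C(X, Y) | graphSet f ⊆ G}} with hB
  have hbasis : IsTopologicalBasis B := by
    refine ⟨?_, ?_, rfl⟩
    · rintro t₁ ⟨G₁, hG₁, rfl⟩ t₂ ⟨G₂, hG₂, rfl⟩ f ⟨hf₁, hf₂⟩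
      exact ⟨{g : C(X, Y) | graphSet g ⊆ G₁ ∩ G₂}, ⟨G₁ ∩ G₂, hG₁.inter hG₂, rfl⟩,
        subset_inter hf₁ hf₂, fun g hg => ⟨hg.trans inter_subset_left,
          hg.trans inter_subset_right⟩⟩
    · apply eq_univ_of_univ_subset
      intro f _
      exact ⟨{g : C(X, Y) | graphSet g ⊆ univ}, ⟨univ, isOpen_univ, rfl⟩, subset_univ _⟩
  refine RegularSpace.of_exists_mem_nhds_isClosed_subset fun f s hs => ?_
  obtain ⟨t, ht, hft, hts⟩ := hbasis.mem_nhds_iff.mp hs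
  obtain ⟨G, hG, rfl⟩ := ht
  -- separate the closed graph of `f` from the closed set `Gᶜ`
  obtain ⟨U, V, hU, hV, hfU, hGV, hUV⟩ :=
    NormalSpace.normal (graphSet f) Gᶜ (isClosed_graphSet f) hG.isClosed_compl
      (disjoint_compl_right.mono_left hft)
  refine ⟨closure {g : C(X, Y) | graphSet g ⊆ U}, ?_, isClosed_closure, ?_⟩
  · exact Filter.mem_of_superset ((hbasis.isOpen ⟨U, hU, rfl⟩).mem_nhds hfU) subset_closure
  · refine subset_trans (fun g hg => ?_) hts
    show graphSet g ⊆ G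
    by_contra hgG
    rw [graphSet_subset_iff] at hgG
    push_neg at hgG
    obtain ⟨x, hx⟩ := hgG
    have hxV : (x, g x) ∈ V := hGV hx
    set W : Set (X × Y) := V ∪ (({x}ᶜ : Set X) ×ˢ univ) with hW
    have hWopen : IsOpen W := hV.union ((isOpen_compl_singleton).prod isOpen_univ)
    have hgW : graphSet g ⊆ W := by
      rw [graphSet_subset_iff]
      intro x'
      by_cases hx' : x' = x
      · subst hx'; exact Or.inl hxV
      · exact Or.inr ⟨hx', mem_univ _⟩
    have := (mem_closure_iff.mp hg) _ (hbasis.isOpen ⟨W, hWopen, rfl⟩) hgW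
    obtain ⟨h, hhW : graphSet h ⊆ W, hhU : graphSet h ⊆ U⟩ := this
    have h1 : (x, h x) ∈ W := (graphSet_subset_iff h W).mp hhW x
    have h2 : (x, h x) ∈ U := (graphSet_subset_iff h U).mp hhU x
    rcases h1 with h1 | h1
    · exact hUV.ne_of_mem h2 h1 rfl
    · exact h1.1 rfl
end

section
/- Let X be a topological space. The collection of all sets of the form B(f, ε) = {g ∈ C(X) : |f(x) − g(x)| < ε(x) for every x ∈ X}, where f ranges over C(X) and ε ranges over the lower semicontinuous functions from X to the open interval (0,1), is a base for the graph topology τ_Γ on C(X). -/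
open TopologicalSpace Set

/-!
A ball `B(f, ε)` is the set `F_G` for the region `G = {(x, t) | |f x - t| < ε x}`, which is open
because `ε` is lower semicontinuous. Conversely the sets `F_G` are closed under finite
intersections, hence already a base, and if the graph of `g` lies in the open set `G`, then
`B(g, ε) ⊆ F_G` for `ε x = sup {r ≤ 1/2 | near x, the vertical interval of radius r around the
graph of g lies in G}`.
This supremum is positive since `G` is open and `g` continuous, and it is lower semicontinuous
because the condition on `r` is an open condition on `x`.
-/

open Filter Topology

theorem isOpen_setOf_lt_of_upperSemicontinuous_of_lowerSemicontinuous {α β : Type*}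
    [TopologicalSpace α] [LinearOrder β] [DenselyOrdered β] {u v : α → β}
    (hu : UpperSemicontinuous u) (hv : LowerSemicontinuous v) : IsOpen {x | u x < v x} := by
  have : {x | u x < v x} = ⋃ r, u ⁻¹' Iio r ∩ v ⁻¹' Ioi r := by
    ext x
    simp only [mem_ofPred_eq, mem_iUnion, mem_inter_iff, mem_preimage, mem_Iio, mem_Ioi]
    exact ⟨exists_between, fun ⟨_, hur, hrv⟩ => hur.trans hrv⟩
  rw [this]
  exact isOpen_iUnion fun r => (hu.isOpen_preimage r).inter (hv.isOpen_preimage r)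

theorem lowerSemicontinuous_sSup_of_isOpen {α : Type*} [TopologicalSpace α] {S : α → Set ℝ}
    (hS : ∀ r, IsOpen {x | r ∈ S x}) (hne : ∀ x, (S x).Nonempty)
    (hbdd : ∀ x, BddAbove (S x)) : LowerSemicontinuous fun x => sSup (S x) := by
  intro x b hb
  obtain ⟨r, hr, hbr⟩ := exists_lt_of_lt_csSup (hne x) hb
  filter_upwards [(hS r).mem_nhds hr] with y hy
  exact hbr.trans_le (le_csSup (hbdd y) hy)

section GraphTopology

variable {X : Type*} [TopologicalSpace X]

theorem isTopologicalBasis_graphTopology (Y : Type*) [TopologicalSpace Y] :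
    @IsTopologicalBasis C(X, Y) (graphTopology X Y)
      {S | ∃ G : Set (X × Y), IsOpen G ∧ S = {f : C(X, Y) | graphSet f ⊆ G}} := by
  refine @isTopologicalBasis_of_subbasis_of_finiteInter _ (graphTopology X Y) _ rfl ⟨?_, ?_⟩
  · exact ⟨univ, isOpen_univ, by simp⟩
  · rintro _ ⟨G, hG, rfl⟩ _ ⟨H, hH, rfl⟩
    exact ⟨G ∩ H, hG.inter hH, by ext; simp [subset_inter_iff]⟩

theorem setOf_forall_abs_sub_lt_eq_setOf_graphSet_subset (f : C(X, ℝ)) (ε : X → ℝ) :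
    {g : C(X, ℝ) | ∀ x, |f x - g x| < ε x} =
      {g : C(X, ℝ) | graphSet g ⊆ {p : X × ℝ | |f p.1 - p.2| < ε p.1}} := by
  ext g
  simp only [mem_ofPred_eq, graphSet, ofPred_subset_ofPred, Prod.forall]
  exact ⟨fun hg x t ht => ht ▸ hg x, fun hg x => hg x (g x) rfl⟩

theorem isOpen_setOf_abs_sub_lt {f : C(X, ℝ)} {ε : X → ℝ} (hε : LowerSemicontinuous ε) :
    IsOpen {p : X × ℝ | |f p.1 - p.2| < ε p.1} :=
  isOpen_setOf_lt_of_upperSemicontinuous_of_lowerSemicontinuous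
    (by fun_prop : Continuous fun p : X × ℝ => |f p.1 - p.2|).upperSemicontinuous
    (hε.comp continuous_fst)

variable (g : C(X, ℝ)) (G : Set (X × ℝ))

-- The cap `1/2` keeps the supremum of these radii finite and below `1`.
def graphRadii (x : X) : Set ℝ :=
  {r | r ≤ 1 / 2 ∧ ∀ᶠ y in 𝓝 x, ∀ t, |g y - t| < r → (y, t) ∈ G}

noncomputable def graphRadius (x : X) : ℝ := sSup (graphRadii g G x)

theorem zero_mem_graphRadii (x : X) : (0 : ℝ) ∈ graphRadii g G x :=
  ⟨by norm_num, Eventually.of_forall fun y t ht => absurd ht (abs_nonneg _).not_gt⟩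

theorem bddAbove_graphRadii (x : X) : BddAbove (graphRadii g G x) :=
  ⟨1 / 2, fun _ hr => hr.1⟩

theorem lowerSemicontinuous_graphRadius : LowerSemicontinuous (graphRadius g G) :=
  lowerSemicontinuous_sSup_of_isOpen
    (fun _ => isOpen_const.inter isOpen_setOfPred_eventually_nhds)
    (fun x => ⟨0, zero_mem_graphRadii g G x⟩) (bddAbove_graphRadii g G)

theorem graphRadius_le (x : X) : graphRadius g G x ≤ 1 / 2 :=
  csSup_le ⟨0, zero_mem_graphRadii g G x⟩ fun _ hr => hr.1

variable {g G}

theorem exists_pos_eventually_abs_sub_lt_mem (hG : IsOpen G) (hg : graphSet g ⊆ G) (x : X) :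
    ∃ r > 0, ∀ᶠ y in 𝓝 x, ∀ t, |g y - t| < r → (y, t) ∈ G := by
  -- shear the graph of `g` onto `X × {0}`
  let φ : X × ℝ → X × ℝ := fun p => (p.1, g p.1 + p.2)
  have hφ : ∀ᶠ p in 𝓝 (x, (0 : ℝ)), φ p ∈ G :=
    (by fun_prop : Continuous φ).continuousAt.preimage_mem_nhds
      (hG.mem_nhds (hg (by simp [φ, graphSet])))
  rw [nhds_prod_eq, eventually_prod_iff] at hφ
  obtain ⟨P, hP, Q, hQ, hPQ⟩ := hφ
  obtain ⟨r, hr, hrQ⟩ := Metric.eventually_nhds_iff.mp hQ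
  refine ⟨r, hr, hP.mono fun y hy t ht => ?_⟩
  have hQt : Q (t - g y) := hrQ (by rwa [Real.dist_eq, sub_zero, abs_sub_comm])
  simpa [φ] using hPQ hy hQt

theorem graphRadius_pos (hG : IsOpen G) (hg : graphSet g ⊆ G) (x : X) :
    0 < graphRadius g G x := by
  obtain ⟨r, hr, hrG⟩ := exists_pos_eventually_abs_sub_lt_mem hG hg x
  have hmem : min r (1 / 2) ∈ graphRadii g G x :=
    ⟨min_le_right _ _, hrG.mono fun y hy t ht => hy t (ht.trans_le (min_le_left _ _))⟩
  exact (lt_min hr (by norm_num)).trans_le (le_csSup (bddAbove_graphRadii g G x) hmem)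

theorem graphSet_subset_of_abs_sub_lt_graphRadius {h : C(X, ℝ)}
    (hh : ∀ x, |g x - h x| < graphRadius g G x) : graphSet h ⊆ G := by
  rintro ⟨x, _⟩ (rfl : _ = h x)
  obtain ⟨r, ⟨-, hrG⟩, hr⟩ :=
    exists_lt_of_lt_csSup ⟨0, zero_mem_graphRadii g G x⟩ (hh x)
  exact hrG.self_of_nhds (h x) hr

end GraphTopology

/-- the sets `B(f, ε) = {g ∈ C(X) : |f x - g x| < ε x for all x}`, with
`f ∈ C(X)` and `ε : X → (0,1)` lower semicontinuous, form a base for `(C(X), τ_Γ)`. -/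
theorem isTopologicalBasis_balls (X : Type*) [TopologicalSpace X] :
    @IsTopologicalBasis C(X, ℝ) (graphTopology X ℝ)
      {S | ∃ (f : C(X, ℝ)) (ε : X → ℝ), LowerSemicontinuous ε ∧
        (∀ x, ε x ∈ Set.Ioo (0 : ℝ) 1) ∧
        S = {g : C(X, ℝ) | ∀ x, |f x - g x| < ε x}} := by
  let _ : TopologicalSpace C(X, ℝ) := graphTopology X ℝ
  refine isTopologicalBasis_of_isOpen_of_nhds ?_ fun g U hgU hU => ?_
  · rintro _ ⟨f, ε, hε, -, rfl⟩
    rw [setOf_forall_abs_sub_lt_eq_setOf_graphSet_subset]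
    exact GenerateOpen.basic _ ⟨_, isOpen_setOf_abs_sub_lt hε, rfl⟩
  · obtain ⟨_, ⟨G, hG, rfl⟩, hgG, hGU⟩ :=
      (isTopologicalBasis_graphTopology ℝ).exists_subset_of_mem_open hgU hU
    have hpos := graphRadius_pos hG hgG
    refine ⟨_, ⟨g, graphRadius g G, lowerSemicontinuous_graphRadius g G,
      fun x => ⟨hpos x, (graphRadius_le g G x).trans_lt (by norm_num)⟩, rfl⟩,
      fun x => by simpa using hpos x,
      fun h hh => hGU (graphSet_subset_of_abs_sub_lt_graphRadius hh)⟩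
end

section
/- Let X be a topological space and (Y, d) a metric space. The collection of all sets of the form B(f, ε) = {g ∈ C(X,Y) : d(f(x), g(x)) < ε(x) for every x ∈ X}, where f ranges over C(X,Y) and ε ranges over the lower semicontinuous functions from X to the open interval (0,1), is a base for the graph topology τ_Γ on C(X,Y). -/
open TopologicalSpace Set

lemma ball_eq_FG {X Y : Type*} [TopologicalSpace X] [MetricSpace Y] (f : C(X, Y)) (ε : X → ℝ)
    (hε : LowerSemicontinuous ε) :
    ∃ G : Set (X × Y), IsOpen G ∧
      {g : C(X, Y) | ∀ x, dist (f x) (g x) < ε x} = {g : C(X, Y) | graphSet g ⊆ G} := by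
  refine ⟨{p | dist (f p.1) p.2 < ε p.1}, ?_, ?_⟩
  · have h : {p : X × Y | dist (f p.1) p.2 < ε p.1} =
        ⋃ c : ℝ, ({p : X × Y | dist (f p.1) p.2 < c} ∩ (fun p : X × Y => p.1) ⁻¹' (ε ⁻¹' Ioi c)) := by
      ext p
      simp only [mem_iUnion, mem_inter_iff, mem_setOf_eq, mem_preimage, mem_Ioi]
      exact ⟨fun h => ⟨(dist (f p.1) p.2 + ε p.1) / 2, by linarith, by linarith⟩,
        fun ⟨c, h1, h2⟩ => lt_trans h1 h2⟩
    rw [h]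
    refine isOpen_iUnion fun c => IsOpen.inter ?_ ?_
    · exact isOpen_lt (Continuous.dist (f.continuous.comp continuous_fst) continuous_snd)
        continuous_const
    · exact (hε.isOpen_preimage c).preimage continuous_fst
  · ext g
    simp only [mem_setOf_eq, graphSet, setOf_subset_setOf]
    exact ⟨fun h p hp => by rw [hp]; exact h p.1, fun h x => h (x, g x) rfl⟩

lemma generateOpen_graph {X Y : Type*} [TopologicalSpace X] [TopologicalSpace Y]
    {U : Set C(X, Y)}
    (hU : GenerateOpen {S | ∃ G : Set (X × Y), IsOpen G ∧ S = {f : C(X, Y) | graphSet f ⊆ G}} U) :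
    ∀ f ∈ U, ∃ G : Set (X × Y), IsOpen G ∧ graphSet f ⊆ G ∧
      {g : C(X, Y) | graphSet g ⊆ G} ⊆ U := by
  induction hU with
  | basic S hS =>
      obtain ⟨G, hG, rfl⟩ := hS
      exact fun f hf => ⟨G, hG, hf, subset_rfl⟩
  | univ => exact fun f _ => ⟨univ, isOpen_univ, subset_univ _, subset_univ _⟩
  | inter U V _ _ ihU ihV =>
      intro f hf
      obtain ⟨G1, hG1, hfG1, h1⟩ := ihU f hf.1
      obtain ⟨G2, hG2, hfG2, h2⟩ := ihV f hf.2
      exact ⟨G1 ∩ G2, hG1.inter hG2, subset_inter hfG1 hfG2,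
        fun g hg => ⟨h1 fun p hp => (hg hp).1, h2 fun p hp => (hg hp).2⟩⟩
  | sUnion S _ ih =>
      rintro f ⟨T, hT, hfT⟩
      obtain ⟨G, hG, h1, h2⟩ := ih T hT f hfT
      exact ⟨G, hG, h1, fun g hg => ⟨T, hT, h2 hg⟩⟩

lemma exists_eps {X Y : Type*} [TopologicalSpace X] [MetricSpace Y] (f : C(X, Y))
    {G : Set (X × Y)} (hG : IsOpen G) (hfG : graphSet f ⊆ G) :
    ∃ ε : X → ℝ, LowerSemicontinuous ε ∧ (∀ x, ε x ∈ Ioo (0 : ℝ) 1) ∧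
      ∀ g : C(X, Y), (∀ x, dist (f x) (g x) < ε x) → graphSet g ⊆ G := by
  have key : ∀ x₀ : X, ∃ (V : Set X) (r : ℝ), IsOpen V ∧ x₀ ∈ V ∧ 0 < r ∧ r ≤ 1 ∧
      (∀ x ∈ V, dist (f x) (f x₀) < r / 2) ∧ V ×ˢ Metric.ball (f x₀) r ⊆ G := by
    intro x₀
    have hmem : (x₀, f x₀) ∈ G := hfG rfl
    obtain ⟨u, v, hu, hx₀u, hv, hfv, huv⟩ := mem_nhds_prod_iff'.1 (hG.mem_nhds hmem)
    obtain ⟨r₀, hr₀, hball⟩ := Metric.isOpen_iff.1 hv (f x₀) hfv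
    refine ⟨u ∩ f ⁻¹' Metric.ball (f x₀) (min r₀ 1 / 2), min r₀ 1, hu.inter
      (Metric.isOpen_ball.preimage f.continuous), ⟨hx₀u, ?_⟩, by positivity, min_le_right _ _,
      fun x hx => hx.2, ?_⟩
    · simp [Metric.mem_ball, dist_self]
      positivity
    · rintro ⟨x, y⟩ ⟨hx, hy⟩
      refine huv ⟨hx.1, hball ?_⟩
      exact Metric.ball_subset_ball (min_le_left _ _) hy
  choose V r hVo hxV hr0 hr1 hclose hsub using key
  set S : X → Set ℝ := fun x => {t | ∃ x₀, x ∈ V x₀ ∧ t = r x₀ / 2} with hS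
  have hne : ∀ x, (S x).Nonempty := fun x => ⟨r x / 2, x, hxV x, rfl⟩
  have hbdd : ∀ x, BddAbove (S x) := by
    intro x
    refine ⟨1 / 2, ?_⟩
    rintro t ⟨x₀, _, rfl⟩
    linarith [hr1 x₀]
  refine ⟨fun x => sSup (S x), ?_, ?_, ?_⟩
  · rw [lowerSemicontinuous_iff_isOpen_preimage]
    intro c
    have h : (fun x => sSup (S x)) ⁻¹' Ioi c = ⋃ x₀, ⋃ (_ : c < r x₀ / 2), V x₀ := by
      ext x
      simp only [mem_preimage, mem_Ioi, mem_iUnion]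
      rw [lt_csSup_iff (hbdd x) (hne x)]
      constructor
      · rintro ⟨t, ⟨x₀, hxV', rfl⟩, hct⟩
        exact ⟨x₀, hct, hxV'⟩
      · rintro ⟨x₀, hct, hxV'⟩
        exact ⟨r x₀ / 2, ⟨x₀, hxV', rfl⟩, hct⟩
    rw [h]
    exact isOpen_iUnion fun x₀ => isOpen_iUnion fun _ => hVo x₀
  · intro x
    constructor
    · have := le_csSup (hbdd x) (show r x / 2 ∈ S x from ⟨x, hxV x, rfl⟩)
      linarith [hr0 x]
    · have : sSup (S x) ≤ 1 / 2 := by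
        refine csSup_le (hne x) ?_
        rintro t ⟨x₀, _, rfl⟩
        linarith [hr1 x₀]
      linarith
  · intro g hg p hp
    obtain ⟨x, y⟩ := p
    simp only [graphSet, mem_setOf_eq] at hp
    subst hp
    obtain ⟨t, ⟨x₀, hxV', rfl⟩, hlt⟩ := exists_lt_of_lt_csSup (hne x) (hg x)
    refine hsub x₀ ⟨hxV', ?_⟩
    have h1 : dist (f x) (f x₀) < r x₀ / 2 := hclose x₀ x hxV'
    have : dist (g x) (f x₀) ≤ dist (g x) (f x) + dist (f x) (f x₀) := dist_triangle _ _ _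
    rw [dist_comm (g x) (f x)] at this
    exact Metric.mem_ball.2 (by linarith)

/-- for `X` a topological space and `(Y, d)` a metric space, the sets
`B(f, ε) = {g ∈ C(X,Y) : d (f x) (g x) < ε x for all x}`, with `f ∈ C(X,Y)` and
`ε : X → (0,1)` lower semicontinuous, form a base for `(C(X,Y), τ_Γ)`. -/
theorem isTopologicalBasis_balls_metric (X Y : Type*) [TopologicalSpace X]
    [MetricSpace Y] :
    @IsTopologicalBasis C(X, Y) (graphTopology X Y)
      {S | ∃ (f : C(X, Y)) (ε : X → ℝ), LowerSemicontinuous ε ∧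
        (∀ x, ε x ∈ Set.Ioo (0 : ℝ) 1) ∧
        S = {g : C(X, Y) | ∀ x, dist (f x) (g x) < ε x}} := by
  letI : TopologicalSpace C(X, Y) := graphTopology X Y
  refine isTopologicalBasis_of_isOpen_of_nhds ?_ ?_
  · rintro S ⟨f, ε, hε, hε01, rfl⟩
    obtain ⟨G, hG, hEq⟩ := ball_eq_FG f ε hε
    rw [hEq]
    exact isOpen_generateFrom_of_mem ⟨G, hG, rfl⟩
  · intro f U hfU hU
    have hU' : GenerateOpen
        {S | ∃ G : Set (X × Y), IsOpen G ∧ S = {f : C(X, Y) | graphSet f ⊆ G}} U := hU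
    obtain ⟨G, hG, hfG, hsubU⟩ := generateOpen_graph hU' f hfU
    obtain ⟨ε, hε, hε01, hball⟩ := exists_eps f hG hfG
    exact ⟨{g : C(X, Y) | ∀ x, dist (f x) (g x) < ε x}, ⟨f, ε, hε, hε01, rfl⟩,
      fun x => by simpa using (hε01 x).1, fun g hg => hsubU (hball g hg)⟩
end

section
/- Let X be a topological space. The following are equivalent: (1) the graph topology τ_Γ on C(X) coincides with the fine topology τ_ω, i.e. the topology with base all sets {g ∈ C(X) : |f(x) − g(x)| < η(x) for all x ∈ X} with f ∈ C(X) and η : X → ℝ continuous and everywhere positive; (2) for every lower semicontinuous function ε : X → (0,1) there exists a continuous function η : X → (0,1) such that η(x) ≤ ε(x) for every x ∈ X. -/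
open TopologicalSpace Set

/-- The fine topology `τ_ω` on `C(X)`, with base the sets
`{g | ∀ x, |f x - g x| < η x}` where `f ∈ C(X)` and `η : X → ℝ` is continuous and
everywhere positive. -/
def fineTopology (X : Type*) [TopologicalSpace X] : TopologicalSpace C(X, ℝ) :=
  generateFrom {S | ∃ (f : C(X, ℝ)) (η : X → ℝ), Continuous η ∧ (∀ x, 0 < η x) ∧
    S = {g : C(X, ℝ) | ∀ x, |f x - g x| < η x}}

section Aux

variable {X : Type*} [TopologicalSpace X]

/-- Every set open in the fine topology is a neighborhood, around each of its points `g`,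
of a basic fine set centered at `g`. -/
private lemma fine_nhds {s : Set C(X, ℝ)}
    (hs : GenerateOpen {S | ∃ (f : C(X, ℝ)) (η : X → ℝ), Continuous η ∧ (∀ x, 0 < η x) ∧
      S = {g : C(X, ℝ) | ∀ x, |f x - g x| < η x}} s) :
    ∀ g ∈ s, ∃ η : X → ℝ, Continuous η ∧ (∀ x, 0 < η x) ∧
      {h : C(X, ℝ) | ∀ x, |g x - h x| < η x} ⊆ s := by
  induction hs with
  | basic t ht =>
      obtain ⟨f, η₀, hc, hp, rfl⟩ := ht
      intro g hg
      refine ⟨fun x => η₀ x - |f x - g x|, hc.sub (f.continuous.sub g.continuous).abs,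
        fun x => sub_pos.mpr (hg x), fun h hh x => ?_⟩
      calc |f x - h x| ≤ |f x - g x| + |g x - h x| := abs_sub_le _ _ _
        _ < |f x - g x| + (η₀ x - |f x - g x|) := by
              have hhx : |g x - h x| < η₀ x - |f x - g x| := hh x
              linarith
        _ = η₀ x := by ring
  | univ =>
      intro g _
      exact ⟨fun _ => 1, continuous_const, fun _ => one_pos, fun _ _ => mem_univ _⟩
  | inter t₁ t₂ _ _ ih₁ ih₂ =>
      intro g hg
      obtain ⟨η₁, hc₁, hp₁, hs₁⟩ := ih₁ g hg.1
      obtain ⟨η₂, hc₂, hp₂, hs₂⟩ := ih₂ g hg.2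
      refine ⟨fun x => min (η₁ x) (η₂ x), hc₁.min hc₂,
        fun x => lt_min (hp₁ x) (hp₂ x), fun h hh => ?_⟩
      exact ⟨hs₁ fun x => (hh x).trans_le (min_le_left _ _),
        hs₂ fun x => (hh x).trans_le (min_le_right _ _)⟩
  | sUnion T _ ih =>
      intro g hg
      obtain ⟨t, htT, hgt⟩ := hg
      obtain ⟨η, hc, hp, hsub⟩ := ih t htT g hgt
      exact ⟨η, hc, hp, hsub.trans (subset_sUnion_of_mem htT)⟩

/-- Associated to `f` with graph in the open set `G`, a lower semicontinuous
`ε : X → (0,1)` such that `|f x - y| < ε x` implies `(x, y) ∈ G`. -/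
private lemma exists_lsc {G : Set (X × ℝ)} (hG : IsOpen G)
    (f : C(X, ℝ)) (hf : graphSet f ⊆ G) :
    ∃ ε : X → ℝ, LowerSemicontinuous ε ∧ (∀ x, ε x ∈ Ioo (0 : ℝ) 1) ∧
      ∀ x y, |f x - y| < ε x → (x, y) ∈ G := by
  set A : X → Set ℝ := fun x =>
    {r : ℝ | r ∈ Ioc (0 : ℝ) 1 ∧ ∀ᶠ x' in nhds x, ∀ y : ℝ, |f x' - y| ≤ r → (x', y) ∈ G}
    with hA
  have hbdd : ∀ x, BddAbove (A x) := fun x => ⟨1, fun r hr => hr.1.2⟩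
  have hne : ∀ x, (A x).Nonempty := by
    intro x
    have hxG : (x, f x) ∈ G := hf rfl
    obtain ⟨u, v, hu, hv, hxu, hfv, huv⟩ := isOpen_prod_iff.mp hG x (f x) hxG
    obtain ⟨δ, hδ, hball⟩ := Metric.isOpen_iff.mp hv (f x) hfv
    refine ⟨min (δ / 3) 1, ⟨lt_min (by linarith) one_pos, min_le_right _ _⟩, ?_⟩
    have hU : u ∩ f ⁻¹' Metric.ball (f x) (δ / 3) ∈ nhds x := by
      refine (hu.inter (Metric.isOpen_ball.preimage f.continuous)).mem_nhds ?_
      exact ⟨hxu, Metric.mem_ball_self (by positivity)⟩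
    filter_upwards [hU] with x' hx' y hy
    have h1 : |f x' - f x| < δ / 3 := by
      have := hx'.2
      simpa [Metric.mem_ball, Real.dist_eq, abs_sub_comm] using this
    have h2 : |f x - y| < δ := by
      have : |f x' - y| ≤ δ / 3 := hy.trans (min_le_left _ _)
      calc |f x - y| ≤ |f x - f x'| + |f x' - y| := abs_sub_le _ _ _
        _ < δ / 3 + δ / 3 + δ / 3 := by rw [abs_sub_comm]; linarith
        _ = δ := by ring
    exact huv ⟨hx'.1, hball (by simpa [Metric.mem_ball, Real.dist_eq, abs_sub_comm] using h2)⟩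
  refine ⟨fun x => sSup (A x) / 2, ?_, ?_, ?_⟩
  · intro x c hc
    have hc' : 2 * c < sSup (A x) := by linarith
    obtain ⟨r, hrA, hr⟩ := exists_lt_of_lt_csSup (hne x) hc'
    have := eventually_eventually_nhds.mpr hrA.2
    filter_upwards [this] with x' hx'
    have : r ∈ A x' := ⟨hrA.1, hx'⟩
    have : r ≤ sSup (A x') := le_csSup (hbdd x') this
    linarith
  · intro x
    obtain ⟨r, hrA⟩ := hne x
    constructor
    · have : r ≤ sSup (A x) := le_csSup (hbdd x) hrA
      have := hrA.1.1
      linarith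
    · have : sSup (A x) ≤ 1 := csSup_le (hne x) fun r hr => hr.1.2
      linarith
  · intro x y hxy
    have h1 : sSup (A x) / 2 < sSup (A x) := by
      obtain ⟨r, hrA⟩ := hne x
      have : r ≤ sSup (A x) := le_csSup (hbdd x) hrA
      have := hrA.1.1
      linarith
    obtain ⟨r, hrA, hr⟩ := exists_lt_of_lt_csSup (hne x) (hxy.trans h1)
    exact hrA.2.self_of_nhds y (le_of_lt hr)

end Aux

/-- `τ_ω = τ_Γ` on `C(X)` iff every lower semicontinuous
`ε : X → (0,1)` admits a continuous minorant `η : X → (0,1)` with `η ≤ ε`. -/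
theorem fineTopology_eq_graphTopology_iff (X : Type*) [TopologicalSpace X] :
    fineTopology X = graphTopology X ℝ ↔
      ∀ ε : X → ℝ, LowerSemicontinuous ε → (∀ x, ε x ∈ Set.Ioo (0 : ℝ) 1) →
        ∃ η : X → ℝ, Continuous η ∧ (∀ x, η x ∈ Set.Ioo (0 : ℝ) 1) ∧
          ∀ x, η x ≤ ε x := by
  constructor
  · -- equality of topologies implies the insertion property
    intro h ε hε hεI
    set G : Set (X × ℝ) := {p | |p.2| < ε p.1} with hGdef
    have hGopen : IsOpen G := by
      have hEq : G = ⋃ q : ℚ, {x | (q : ℝ) < ε x} ×ˢ {y : ℝ | |y| < (q : ℝ)} := by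
        ext ⟨x, y⟩
        simp only [hGdef, mem_iUnion, mem_prod, mem_setOf_eq]
        constructor
        · intro hy
          obtain ⟨q, hq1, hq2⟩ := exists_rat_btwn hy
          exact ⟨q, hq2, hq1⟩
        · rintro ⟨q, h1, h2⟩; exact h2.trans h1
      rw [hEq]
      refine isOpen_iUnion fun q => IsOpen.prod ?_ ?_
      · exact lowerSemicontinuous_iff_isOpen_preimage.mp hε q
      · exact isOpen_Iio.preimage continuous_abs
    have hF : GenerateOpen {S | ∃ (f : C(X, ℝ)) (η : X → ℝ), Continuous η ∧ (∀ x, 0 < η x) ∧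
        S = {g : C(X, ℝ) | ∀ x, |f x - g x| < η x}} {g : C(X, ℝ) | graphSet g ⊆ G} := by
      have h1 : (graphTopology X ℝ).IsOpen {g : C(X, ℝ) | graphSet g ⊆ G} :=
        TopologicalSpace.GenerateOpen.basic _ ⟨G, hGopen, rfl⟩
      rw [← h] at h1
      exact h1
    have h0 : (0 : C(X, ℝ)) ∈ {g : C(X, ℝ) | graphSet g ⊆ G} := by
      intro p hp
      have hp2 : p.2 = 0 := hp
      simp only [hGdef, mem_setOf_eq, hp2, abs_zero]
      exact (hεI p.1).1
    obtain ⟨η, hc, hp, hsub⟩ := fine_nhds hF 0 h0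
    have key : ∀ x, η x / 2 < ε x := by
      intro x
      have hmem : (⟨fun x => η x / 2, by fun_prop⟩ : C(X, ℝ)) ∈
          {h : C(X, ℝ) | ∀ x, |(0 : C(X, ℝ)) x - h x| < η x} := by
        intro x
        simp only [ContinuousMap.coe_mk, ContinuousMap.zero_apply, zero_sub, abs_neg]
        rw [abs_of_pos (half_pos (hp x))]
        linarith [hp x]
      have hin := hsub hmem (show ((x, η x / 2) : X × ℝ) ∈ graphSet _ from rfl)
      simp only [hGdef, mem_setOf_eq] at hin
      rwa [abs_of_pos (half_pos (hp x))] at hin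
    refine ⟨fun x => η x / 2, by fun_prop, fun x => ⟨half_pos (hp x), (key x).trans (hεI x).2⟩,
      fun x => (key x).le⟩
  · -- the insertion property implies equality of topologies
    intro h
    apply le_antisymm
    · -- fineTopology ≤ graphTopology : every graph generator is fine-open
      refine @le_generateFrom _ (fineTopology X) _ ?_
      rintro S ⟨G, hG, rfl⟩
      have key : ∀ f : C(X, ℝ), graphSet f ⊆ G →
          ∃ B : Set C(X, ℝ), GenerateOpen {S | ∃ (f : C(X, ℝ)) (η : X → ℝ), Continuous η ∧
            (∀ x, 0 < η x) ∧ S = {g : C(X, ℝ) | ∀ x, |f x - g x| < η x}} B ∧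
            f ∈ B ∧ B ⊆ {g : C(X, ℝ) | graphSet g ⊆ G} := by
        intro f hf
        obtain ⟨ε, hlsc, hεI, hεG⟩ := exists_lsc hG f hf
        obtain ⟨η, hc, hηI, hηε⟩ := h ε hlsc hεI
        refine ⟨{g : C(X, ℝ) | ∀ x, |f x - g x| < η x},
          TopologicalSpace.GenerateOpen.basic _ ⟨f, η, hc, fun x => (hηI x).1, rfl⟩,
          fun x => by simpa using (hηI x).1, fun g hg p hp => ?_⟩
        have hp2 : p.2 = g p.1 := hp
        rw [show p = (p.1, p.2) from rfl, hp2]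
        exact hεG p.1 (g p.1) ((hg p.1).trans_le (hηε p.1))
      choose B hBopen hBmem hBsub using key
      have hEq : {g : C(X, ℝ) | graphSet g ⊆ G} =
          ⋃₀ {t | ∃ f : C(X, ℝ), ∃ hf : graphSet f ⊆ G, t = B f hf} := by
        ext g
        constructor
        · intro hg
          exact ⟨B g hg, ⟨g, hg, rfl⟩, hBmem g hg⟩
        · rintro ⟨t, ⟨f, hf, rfl⟩, hgt⟩
          exact hBsub f hf hgt
      rw [hEq]
      apply TopologicalSpace.GenerateOpen.sUnion
      rintro t ⟨f, hf, rfl⟩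
      exact hBopen f hf
    · -- graphTopology ≤ fineTopology : every fine generator is graph-open
      refine @le_generateFrom _ (graphTopology X ℝ) _ ?_
      rintro S ⟨f, η, hc, hp, rfl⟩
      have hGopen : IsOpen {p : X × ℝ | |f p.1 - p.2| < η p.1} :=
        isOpen_lt ((f.continuous.comp continuous_fst).sub continuous_snd).abs
          (hc.comp continuous_fst)
      have hEq : {g : C(X, ℝ) | ∀ x, |f x - g x| < η x} =
          {g : C(X, ℝ) | graphSet g ⊆ {p : X × ℝ | |f p.1 - p.2| < η p.1}} := by
        ext g
        constructor
        · intro hg p hp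
          have hp2 : p.2 = g p.1 := hp
          simp only [mem_setOf_eq, hp2]
          exact hg p.1
        · intro hg x
          exact hg (show ((x, g x) : X × ℝ) ∈ graphSet g from rfl)
      rw [hEq]
      exact TopologicalSpace.GenerateOpen.basic _ ⟨_, hGopen, rfl⟩
end

section
/- Let X be a compact metrizable topological space. Then the graph topology τ_Γ on C(X) coincides with the topology τ_u of uniform convergence (the topology induced by the supremum metric on C(X)). -/
open TopologicalSpace Set

/-- The truncated supremum metric `d(f, g) = min {1, sup_x |f x - g x|}` on `C(X)`
(computed in `ℝ≥0∞` so that an unbounded supremum is truncated to `1`). -/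
noncomputable def supDist {X : Type*} [TopologicalSpace X] (f g : C(X, ℝ)) : ℝ :=
  (min 1 (⨆ x, edist (f x) (g x))).toReal

/-- The topology `τ_u` of uniform convergence on `C(X)`: the topology induced by the
supremum metric `supDist`, i.e. the topology generated by the open balls. -/
noncomputable def uniformTopology (X : Type*) [TopologicalSpace X] :
    TopologicalSpace C(X, ℝ) :=
  generateFrom {S | ∃ (f : C(X, ℝ)) (ε : ℝ), 0 < ε ∧ S = {g : C(X, ℝ) | supDist f g < ε}}

/-- Sufficient condition for a set to be open in a generated topology. -/
lemma generateOpen_of_forall {α : Type*} {B : Set (Set α)} {S : Set α}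
    (h : ∀ a ∈ S, ∃ b ∈ B, a ∈ b ∧ b ⊆ S) : TopologicalSpace.GenerateOpen B S := by
  have hS : S = ⋃₀ {b | b ∈ B ∧ b ⊆ S} := by
    apply subset_antisymm
    · intro a ha
      obtain ⟨b, hb, hab, hbs⟩ := h a ha
      exact ⟨b, ⟨hb, hbs⟩, hab⟩
    · rintro a ⟨b, ⟨-, hbs⟩, hab⟩
      exact hbs hab
  rw [hS]
  exact .sUnion _ fun b hb => .basic b hb.1

lemma min_one_add_le {a c : ENNReal} : min 1 (a + c) ≤ min 1 a + c := by
  rcases le_total 1 a with h | h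
  · calc min 1 (a + c) ≤ 1 := min_le_left _ _
    _ ≤ min 1 a + c := by
        rw [min_eq_left h]; exact le_add_right le_rfl
  · calc min 1 (a + c) ≤ a + c := min_le_right _ _
    _ = min 1 a + c := by rw [min_eq_right h]

lemma supDist_self {X : Type*} [TopologicalSpace X] (f : C(X, ℝ)) : supDist f f = 0 := by
  simp [supDist]

/-- If the (truncated) sup distance is less than `ε ≤ 1`, then every pointwise
`edist` is less than `ENNReal.ofReal ε`. -/
lemma edist_lt_of_supDist_lt {X : Type*} [TopologicalSpace X] {f g : C(X, ℝ)} {ε : ℝ}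
    (hε : ε ≤ 1) (h : supDist f g < ε) (x : X) : edist (f x) (g x) < ENNReal.ofReal ε := by
  set S := ⨆ x, edist (f x) (g x) with hSdef
  have hne : min 1 S ≠ ⊤ := by
    exact ne_top_of_le_ne_top (by simp) (min_le_left _ _)
  have h1 : min 1 S < ENNReal.ofReal ε :=
    (ENNReal.lt_ofReal_iff_toReal_lt hne).2 h
  have h2 : S < ENNReal.ofReal ε := by
    rcases min_lt_iff.1 h1 with h' | h'
    · exact absurd h' (not_lt.2 (by simpa using ENNReal.ofReal_le_ofReal hε))
    · exact h'
  exact lt_of_le_of_lt (le_iSup (fun x => edist (f x) (g x)) x) h2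

/-- for `X` compact and metrizable, the graph topology `τ_Γ` on `C(X)`
coincides with the topology `τ_u` of uniform convergence. -/
theorem graphTopology_eq_uniformTopology (X : Type*) [TopologicalSpace X]
    [CompactSpace X] [MetrizableSpace X] :
    graphTopology X ℝ = uniformTopology X := by
  letI : MetricSpace X := TopologicalSpace.metrizableSpaceMetric X
  apply le_antisymm
  · -- every ball is open in the graph topology
    apply le_generateFrom
    rintro S ⟨f, ε, hε, rfl⟩
    apply generateOpen_of_forall
    intro g hg
    simp only [mem_setOf_eq] at hg
    set d := supDist f g with hd
    set s : ℝ := (ε - d) / 2 with hs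
    have hs0 : 0 < s := by rw [hs]; linarith
    refine ⟨{h : C(X, ℝ) | graphSet h ⊆ {p : X × ℝ | |p.2 - g p.1| < s}}, ?_, ?_, ?_⟩
    · refine ⟨{p : X × ℝ | |p.2 - g p.1| < s}, ?_, rfl⟩
      have : Continuous fun p : X × ℝ => |p.2 - g p.1| :=
        (continuous_snd.sub (g.continuous.comp continuous_fst)).abs
      exact isOpen_Iio.preimage this
    · intro p hp
      simp only [graphSet, mem_setOf_eq] at hp ⊢
      rw [hp]
      simpa using hs0
    · intro h hh
      simp only [mem_setOf_eq] at hh ⊢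
      have key : ∀ x, edist (g x) (h x) ≤ ENNReal.ofReal s := by
        intro x
        have : (x, h x) ∈ {p : X × ℝ | |p.2 - g p.1| < s} := hh rfl
        simp only [mem_setOf_eq] at this
        rw [edist_dist, Real.dist_eq]
        exact ENNReal.ofReal_le_ofReal (by rw [abs_sub_comm]; exact this.le)
      have hSfh : (⨆ x, edist (f x) (h x)) ≤ (⨆ x, edist (f x) (g x)) + ENNReal.ofReal s := by
        apply iSup_le
        intro x
        calc edist (f x) (h x) ≤ edist (f x) (g x) + edist (g x) (h x) := edist_triangle _ _ _
        _ ≤ (⨆ x, edist (f x) (g x)) + ENNReal.ofReal s :=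
            add_le_add (le_iSup (fun x => edist (f x) (g x)) x) (key x)
      have h1 : min 1 (⨆ x, edist (f x) (h x)) ≤
          min 1 (⨆ x, edist (f x) (g x)) + ENNReal.ofReal s :=
        le_trans (min_le_min le_rfl hSfh) min_one_add_le
      have hfin : min 1 (⨆ x, edist (f x) (g x)) + ENNReal.ofReal s ≠ ⊤ := by
        apply ENNReal.add_ne_top.2
        exact ⟨ne_top_of_le_ne_top (by simp) (min_le_left _ _), ENNReal.ofReal_ne_top⟩
      have h2 : supDist f h ≤ d + s := by
        have := ENNReal.toReal_mono hfin h1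
        rwa [ENNReal.toReal_add (ne_top_of_le_ne_top (by simp) (min_le_left _ _))
          ENNReal.ofReal_ne_top, ENNReal.toReal_ofReal hs0.le] at this
      have : d + s < ε := by
        rw [hs]; linarith
      exact lt_of_le_of_lt h2 this
  · -- every graph-basic set is open in the uniform topology
    apply le_generateFrom
    rintro S ⟨G, hG, rfl⟩
    apply generateOpen_of_forall
    intro f hf
    simp only [mem_setOf_eq] at hf
    have hcg : IsCompact (graphSet f) := by
      have hgr : graphSet f = Set.range fun x => (x, f x) := by
        ext ⟨a, b⟩
        simp only [graphSet, mem_setOf_eq, Set.mem_range, Prod.mk.injEq]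
        constructor
        · rintro rfl; exact ⟨a, rfl, rfl⟩
        · rintro ⟨x, rfl, rfl⟩; rfl
      rw [hgr]
      exact isCompact_range (continuous_id.prodMk f.continuous)
    obtain ⟨δ, hδ, hsub⟩ := hcg.exists_thickening_subset_open hG hf
    refine ⟨{g : C(X, ℝ) | supDist f g < min δ 1}, ⟨f, min δ 1, by positivity, rfl⟩, ?_, ?_⟩
    · simp only [mem_setOf_eq, supDist_self]; positivity
    · intro g hg
      simp only [mem_setOf_eq] at hg ⊢
      intro p hp
      obtain ⟨x, rfl⟩ : ∃ x, p = (x, g x) := by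
        rcases p with ⟨x, y⟩
        exact ⟨x, by simp only [graphSet, mem_setOf_eq] at hp; rw [hp]⟩
      apply hsub
      rw [Metric.mem_thickening_iff]
      refine ⟨(x, f x), rfl, ?_⟩
      have hx : edist (f x) (g x) < ENNReal.ofReal (min δ 1) :=
        edist_lt_of_supDist_lt (min_le_right _ _) hg x
      have hx' : dist (f x) (g x) < min δ 1 := edist_lt_ofReal.1 hx
      calc dist (x, g x) (x, f x) = max (dist x x) (dist (g x) (f x)) := Prod.dist_eq
      _ = dist (g x) (f x) := by rw [dist_self]; exact max_eq_right dist_nonneg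
      _ = dist (f x) (g x) := dist_comm _ _
      _ < min δ 1 := hx'
      _ ≤ δ := min_le_left _ _
end
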